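/- Let A, C ∈ ℝ^{n×n}, B₁, D₁ ∈ ℝ^{n×m₁}, B₂, D₂ ∈ ℝ^{n×m₂}, Q₁ ∈ Sym_n(ℝ), R₁ ∈ Sym_{m₁}(ℝ), and let P₁, P₂ ∈ Sym_n(ℝ) be positive semidefinite with R₂ + D₂ᵀP₂D₂ positive definite and R₁ + 𝐃ᵀP₁𝐃 positive definite, where 𝐁 = B₁ − B₂(R₂+D₂ᵀP₂D₂)⁻¹D₂ᵀP₂D₁, 𝐃 = D₁ − D₂(R₂+D₂ᵀP₂D₂)⁻¹D₂ᵀP₂D₁, K = (R₂+D₂ᵀP₂D₂)⁻¹(B₂ᵀP₂+D₂ᵀP₂C), and L = (R₂+D₂ᵀP₂D₂)⁻¹D₂ᵀP₂D₁. Fix x ∈ ℝⁿ and define g : ℝ^{m₁} → ℝ by g(μ) = (P₁x)ᵀ(Ax + B₁μ + B₂ν(μ)) + ½xᵀQ₁x + ½μᵀR₁μ + ½Tr(P₁(Cx+D₁μ+D₂ν(μ))(Cx+D₁μ+D₂ν(μ))ᵀ), where ν(μ) = −Kx − Lμ. Then μ* = −(R₁+𝐃ᵀP₁𝐃)⁻¹(𝐁ᵀP₁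 + 𝐃ᵀP₁(C−D₂K))x is the unique minimizer of g: g(μ*) ≤ g(μ) for all μ ∈ ℝ^{m₁}, with equality only if μ = μ*. -/

import Mathlib

open Matrix

noncomputable section

/-- `𝐁(P₂) = B₁ − B₂(R₂+D₂ᵀP₂D₂)⁻¹D₂ᵀP₂D₁`. -/
def Bbold {n m1 m2 : ℕ} (B1 D1 : Matrix (Fin n) (Fin m1) ℝ)
    (B2 D2 : Matrix (Fin n) (Fin m2) ℝ) (R2 : Matrix (Fin m2) (Fin m2) ℝ)
    (P2 : Matrix (Fin n) (Fin n) ℝ) : Matrix (Fin n) (Fin m1) ℝ :=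
  B1 - B2 * (R2 + D2ᵀ * P2 * D2)⁻¹ * D2ᵀ * P2 * D1

/-- `𝐃(P₂) = D₁ − D₂(R₂+D₂ᵀP₂D₂)⁻¹D₂ᵀP₂D₁`. -/
def Dbold {n m1 m2 : ℕ} (D1 : Matrix (Fin n) (Fin m1) ℝ)
    (D2 : Matrix (Fin n) (Fin m2) ℝ) (R2 : Matrix (Fin m2) (Fin m2) ℝ)
    (P2 : Matrix (Fin n) (Fin n) ℝ) : Matrix (Fin n) (Fin m1) ℝ :=
  D1 - D2 * (R2 + D2ᵀ * P2 * D2)⁻¹ * D2ᵀ * P2 * D1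

/-- `K = (R₂+D₂ᵀP₂D₂)⁻¹(B₂ᵀP₂+D₂ᵀP₂C)`. -/
def Kmat {n m2 : ℕ} (C : Matrix (Fin n) (Fin n) ℝ) (B2 D2 : Matrix (Fin n) (Fin m2) ℝ)
    (R2 : Matrix (Fin m2) (Fin m2) ℝ) (P2 : Matrix (Fin n) (Fin n) ℝ) :
    Matrix (Fin m2) (Fin n) ℝ :=
  (R2 + D2ᵀ * P2 * D2)⁻¹ * (B2ᵀ * P2 + D2ᵀ * P2 * C)

/-- `L = (R₂+D₂ᵀP₂D₂)⁻¹D₂ᵀP₂D₁`. -/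
def Lmat {n m1 m2 : ℕ} (D1 : Matrix (Fin n) (Fin m1) ℝ) (D2 : Matrix (Fin n) (Fin m2) ℝ)
    (R2 : Matrix (Fin m2) (Fin m2) ℝ) (P2 : Matrix (Fin n) (Fin n) ℝ) :
    Matrix (Fin m2) (Fin m1) ℝ :=
  (R2 + D2ᵀ * P2 * D2)⁻¹ * D2ᵀ * P2 * D1

/-- The leader's Hamiltonian `H₁` evaluated at `p₁ = P₁ x`, `q₁ = P₁`, and at the
follower's optimal reaction `ν(μ) = −Kx − Lμ`. -/
def leaderHamiltonian {n m1 m2 : ℕ} (A C : Matrix (Fin n) (Fin n) ℝ)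
    (B1 D1 : Matrix (Fin n) (Fin m1) ℝ) (B2 D2 : Matrix (Fin n) (Fin m2) ℝ)
    (Q1 P1 P2 : Matrix (Fin n) (Fin n) ℝ) (R1 : Matrix (Fin m1) (Fin m1) ℝ)
    (R2 : Matrix (Fin m2) (Fin m2) ℝ) (x : Fin n → ℝ) (μ : Fin m1 → ℝ) : ℝ :=
  (P1 *ᵥ x) ⬝ᵥ (A *ᵥ x + B1 *ᵥ μ
      + B2 *ᵥ (-(Kmat C B2 D2 R2 P2 *ᵥ x) - Lmat D1 D2 R2 P2 *ᵥ μ))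
    + (1 / 2) * (x ⬝ᵥ (Q1 *ᵥ x)) + (1 / 2) * (μ ⬝ᵥ (R1 *ᵥ μ))
    + (1 / 2) * Matrix.trace (P1 *
        Matrix.vecMulVec
          (C *ᵥ x + D1 *ᵥ μ + D2 *ᵥ (-(Kmat C B2 D2 R2 P2 *ᵥ x) - Lmat D1 D2 R2 P2 *ᵥ μ))
          (C *ᵥ x + D1 *ᵥ μ + D2 *ᵥ (-(Kmat C B2 D2 R2 P2 *ᵥ x) - Lmat D1 D2 R2 P2 *ᵥ μ)))

/-- The leader's optimal gain applied to `x`: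
`μ* = −(R₁+𝐃ᵀP₁𝐃)⁻¹(𝐁ᵀP₁ + 𝐃ᵀP₁(C−D₂K))x`. -/
def leaderMinimizer {n m1 m2 : ℕ} (C : Matrix (Fin n) (Fin n) ℝ)
    (B1 D1 : Matrix (Fin n) (Fin m1) ℝ) (B2 D2 : Matrix (Fin n) (Fin m2) ℝ)
    (P1 P2 : Matrix (Fin n) (Fin n) ℝ) (R1 : Matrix (Fin m1) (Fin m1) ℝ)
    (R2 : Matrix (Fin m2) (Fin m2) ℝ) (x : Fin n → ℝ) : Fin m1 → ℝ :=
  -(((R1 + (Dbold D1 D2 R2 P2)ᵀ * P1 * Dbold D1 D2 R2 P2)⁻¹ *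
      ((Bbold B1 D1 B2 D2 R2 P2)ᵀ * P1
        + (Dbold D1 D2 R2 P2)ᵀ * P1 * (C - D2 * Kmat C B2 D2 R2 P2))) *ᵥ x)


lemma dot_mulVec_flip {n m : ℕ} (M : Matrix (Fin n) (Fin m) ℝ) (v : Fin n → ℝ) (w : Fin m → ℝ) :
    v ⬝ᵥ (M *ᵥ w) = (Mᵀ *ᵥ v) ⬝ᵥ w := by
  rw [Matrix.dotProduct_mulVec, ← Matrix.vecMul_transpose, transpose_transpose]

lemma dot_flip' {n m : ℕ} (M : Matrix (Fin n) (Fin m) ℝ) (v : Fin n → ℝ) (w : Fin m → ℝ) :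
    (M *ᵥ w) ⬝ᵥ v = w ⬝ᵥ (Mᵀ *ᵥ v) := by
  rw [dotProduct_comm, dot_mulVec_flip, dotProduct_comm]

lemma trace_vecMulVec' {n : ℕ} (P : Matrix (Fin n) (Fin n) ℝ) (v : Fin n → ℝ) :
    Matrix.trace (P * vecMulVec v v) = v ⬝ᵥ (P *ᵥ v) := by
  simp only [Matrix.trace, Matrix.diag, Matrix.mul_apply, vecMulVec_apply, dotProduct,
    mulVec, Finset.mul_sum]
  congr 1; ext i; congr 1; ext j; ring

lemma quad_min {m : ℕ} (S : Matrix (Fin m) (Fin m) ℝ) (hS : S.PosDef)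
    (b : Fin m → ℝ) (c : ℝ) (g : (Fin m → ℝ) → ℝ)
    (hg : ∀ μ, g μ = (1/2) * (μ ⬝ᵥ (S *ᵥ μ)) + b ⬝ᵥ μ + c) :
    (∀ μ, g (-(S⁻¹ *ᵥ b)) ≤ g μ) ∧
    (∀ μ, g μ = g (-(S⁻¹ *ᵥ b)) → μ = -(S⁻¹ *ᵥ b)) := by
  set μs := -(S⁻¹ *ᵥ b) with hμs
  have hdet : IsUnit S.det := isUnit_iff_ne_zero.mpr hS.det_pos.ne'
  have hinv : S *ᵥ μs = -b := by
    rw [hμs, mulVec_neg, mulVec_mulVec, Matrix.mul_nonsing_inv _ hdet, one_mulVec]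
  have hsym : Sᵀ = S := by
    have := hS.isHermitian.eq
    simpa using this
  have key : ∀ μ, g μ - g μs = (1/2) * ((μ - μs) ⬝ᵥ (S *ᵥ (μ - μs))) := by
    intro μ
    have h1 : μs ⬝ᵥ (S *ᵥ μ) = μ ⬝ᵥ (S *ᵥ μs) := by
      rw [dot_mulVec_flip, hsym, dotProduct_comm]
    have h2 : μ ⬝ᵥ (S *ᵥ μs) = -(b ⬝ᵥ μ) := by
      rw [hinv, dotProduct_neg, dotProduct_comm]
    have h3 : μs ⬝ᵥ (S *ᵥ μs) = -(b ⬝ᵥ μs) := by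
      rw [hinv, dotProduct_neg, dotProduct_comm]
    rw [hg, hg]
    simp only [sub_dotProduct, dotProduct_sub, mulVec_sub]
    rw [h3, h1, h2]
    ring
  constructor
  · intro μ
    have hq : 0 ≤ (μ - μs) ⬝ᵥ (S *ᵥ (μ - μs)) := by
      have := hS.posSemidef.dotProduct_mulVec_nonneg (μ - μs)
      simpa using this
    nlinarith [key μ]
  · intro μ hμ
    by_contra hne
    have h0 : μ - μs ≠ 0 := sub_ne_zero.mpr hne
    have hpos := hS.dotProduct_mulVec_pos h0
    simp only [star_trivial] at hpos
    have hk := key μ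
    rw [hμ, sub_self] at hk
    linarith

lemma expand_core {n m : ℕ} (P1 Q1 M1 M2 : Matrix (Fin n) (Fin n) ℝ) (hP : P1ᵀ = P1)
    (R1 : Matrix (Fin m) (Fin m) ℝ) (Bb Db : Matrix (Fin n) (Fin m) ℝ)
    (x : Fin n → ℝ) (μ : Fin m → ℝ) :
    (P1 *ᵥ x) ⬝ᵥ (M1 *ᵥ x + Bb *ᵥ μ) + (1/2) * (x ⬝ᵥ (Q1 *ᵥ x)) + (1/2) * (μ ⬝ᵥ (R1 *ᵥ μ))
      + (1/2) * ((M2 *ᵥ x + Db *ᵥ μ) ⬝ᵥ (P1 *ᵥ (M2 *ᵥ x + Db *ᵥ μ)))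
    = (1/2) * (μ ⬝ᵥ ((R1 + Dbᵀ * P1 * Db) *ᵥ μ))
      + ((Bbᵀ * P1) *ᵥ x + (Dbᵀ * P1) *ᵥ (M2 *ᵥ x)) ⬝ᵥ μ
      + ((P1 *ᵥ x) ⬝ᵥ (M1 *ᵥ x) + (1/2) * (x ⬝ᵥ (Q1 *ᵥ x))
          + (1/2) * ((M2 *ᵥ x) ⬝ᵥ (P1 *ᵥ (M2 *ᵥ x)))) := by
  set w := M2 *ᵥ x with hw
  have e1 : (P1 *ᵥ x) ⬝ᵥ (Bb *ᵥ μ) = ((Bbᵀ * P1) *ᵥ x) ⬝ᵥ μ := by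
    rw [dot_mulVec_flip, mulVec_mulVec]
  have e2 : w ⬝ᵥ (P1 *ᵥ (Db *ᵥ μ)) = ((Dbᵀ * P1) *ᵥ w) ⬝ᵥ μ := by
    rw [mulVec_mulVec, dot_mulVec_flip, transpose_mul, hP]
  have e3 : (Db *ᵥ μ) ⬝ᵥ (P1 *ᵥ w) = ((Dbᵀ * P1) *ᵥ w) ⬝ᵥ μ := by
    rw [dot_flip', mulVec_mulVec, dotProduct_comm]
  have e4 : (Db *ᵥ μ) ⬝ᵥ (P1 *ᵥ (Db *ᵥ μ)) = μ ⬝ᵥ ((Dbᵀ * P1 * Db) *ᵥ μ) := by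
    rw [dot_flip', mulVec_mulVec, mulVec_mulVec]
  simp only [dotProduct_add, add_dotProduct, mulVec_add, add_mulVec, e1, e2, e3, e4]
  ring

/-- `μ*` is the unique minimizer of the leader's Hamiltonian
`μ ↦ H₁(t,x,μ,ν(μ),P₁x,P₁)` along the follower's optimal reaction. -/
theorem stmt_8 (n m1 m2 : ℕ) (A C : Matrix (Fin n) (Fin n) ℝ)
    (B1 D1 : Matrix (Fin n) (Fin m1) ℝ) (B2 D2 : Matrix (Fin n) (Fin m2) ℝ)
    (Q1 : Matrix (Fin n) (Fin n) ℝ) (R1 : Matrix (Fin m1) (Fin m1) ℝ)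
    (R2 : Matrix (Fin m2) (Fin m2) ℝ) (hQ1 : Q1.IsSymm) (hR1 : R1.IsSymm)
    (P1 P2 : Matrix (Fin n) (Fin n) ℝ) (hP1 : P1.PosSemidef) (hP2 : P2.PosSemidef)
    (hpd2 : (R2 + D2ᵀ * P2 * D2).PosDef)
    (hpd1 : (R1 + (Dbold D1 D2 R2 P2)ᵀ * P1 * Dbold D1 D2 R2 P2).PosDef)
    (x : Fin n → ℝ) :
    (∀ μ : Fin m1 → ℝ,
      leaderHamiltonian A C B1 D1 B2 D2 Q1 P1 P2 R1 R2 x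
          (leaderMinimizer C B1 D1 B2 D2 P1 P2 R1 R2 x)
        ≤ leaderHamiltonian A C B1 D1 B2 D2 Q1 P1 P2 R1 R2 x μ) ∧
    (∀ μ : Fin m1 → ℝ,
      leaderHamiltonian A C B1 D1 B2 D2 Q1 P1 P2 R1 R2 x μ
          = leaderHamiltonian A C B1 D1 B2 D2 Q1 P1 P2 R1 R2 x
              (leaderMinimizer C B1 D1 B2 D2 P1 P2 R1 R2 x)
        → μ = leaderMinimizer C B1 D1 B2 D2 P1 P2 R1 R2 x) := by
  have hP1sym : P1ᵀ = P1 := by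
    have := hP1.isHermitian.eq
    simpa using this
  have hBB : Bbold B1 D1 B2 D2 R2 P2 = B1 - B2 * Lmat D1 D2 R2 P2 := by
    rw [Bbold, Lmat]; simp [Matrix.mul_assoc]
  have hDD : Dbold D1 D2 R2 P2 = D1 - D2 * Lmat D1 D2 R2 P2 := by
    rw [Dbold, Lmat]; simp [Matrix.mul_assoc]
  set K := Kmat C B2 D2 R2 P2 with hK
  set L := Lmat D1 D2 R2 P2 with hL
  set S := R1 + (Dbold D1 D2 R2 P2)ᵀ * P1 * Dbold D1 D2 R2 P2 with hS
  set bvec := ((Bbold B1 D1 B2 D2 R2 P2)ᵀ * P1) *ᵥ x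
      + ((Dbold D1 D2 R2 P2)ᵀ * P1) *ᵥ ((C - D2 * K) *ᵥ x) with hbvec
  have hmin : leaderMinimizer C B1 D1 B2 D2 P1 P2 R1 R2 x = -(S⁻¹ *ᵥ bvec) := by
    rw [leaderMinimizer, hbvec, hS, ← mulVec_mulVec]
    simp only [← hK, add_mulVec, ← mulVec_mulVec]
  have hg : ∀ μ, leaderHamiltonian A C B1 D1 B2 D2 Q1 P1 P2 R1 R2 x μ
      = (1/2) * (μ ⬝ᵥ (S *ᵥ μ)) + bvec ⬝ᵥ μ
        + ((P1 *ᵥ x) ⬝ᵥ ((A - B2 * K) *ᵥ x) + (1/2) * (x ⬝ᵥ (Q1 *ᵥ x))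
            + (1/2) * (((C - D2 * K) *ᵥ x) ⬝ᵥ (P1 *ᵥ ((C - D2 * K) *ᵥ x)))) := by
    intro μ
    rw [leaderHamiltonian, trace_vecMulVec']
    have hv1 : A *ᵥ x + B1 *ᵥ μ + B2 *ᵥ (-(K *ᵥ x) - L *ᵥ μ)
        = (A - B2 * K) *ᵥ x + Bbold B1 D1 B2 D2 R2 P2 *ᵥ μ := by
      rw [hBB]
      simp only [Matrix.mulVec_sub, Matrix.sub_mulVec, Matrix.mulVec_neg, ← mulVec_mulVec]
      abel
    have hv2 : C *ᵥ x + D1 *ᵥ μ + D2 *ᵥ (-(K *ᵥ x) - L *ᵥ μ)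
        = (C - D2 * K) *ᵥ x + Dbold D1 D2 R2 P2 *ᵥ μ := by
      rw [hDD]
      simp only [Matrix.mulVec_sub, Matrix.sub_mulVec, Matrix.mulVec_neg, ← mulVec_mulVec]
      abel
    rw [hv1, hv2, hS, hbvec]
    exact expand_core P1 Q1 (A - B2 * K) (C - D2 * K) hP1sym R1
      (Bbold B1 D1 B2 D2 R2 P2) (Dbold D1 D2 R2 P2) x μ
  obtain ⟨hle, heq⟩ := quad_min S hpd1 bvec _ _ hg
  constructor
  · intro μ
    rw [hmin]
    exact hle μ
  · intro μ h
    rw [hmin] at h ⊢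
    exact heq μ h
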